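/- There exists n₀ ∈ ℕ such that for all n ≥ n₀ the following holds. Let X = {1, …, ⌊n/2⌋} ⊆ [n], let Y = [n] \ X, and let H be the 3-graph on [n] whose edges are exactly those 3-element subsets e of [n] with |e ∩ Y| ≠ 2. Then d(i,j) ≥ n/2 − 2 for all pairs {i,j} of distinct vertices of [n], but H contains no tight Hamiltonian cycle. -/
import Mathlib


/-- The pair degree `d(i,j)`: the number of vertices `x` with `{i,j,x} ∈ E`. -/
def pairDeg (n : ℕ) (E : Finset (Finset ℕ)) (i j : ℕ) : ℕ :=
  ((Finset.Icc 1 n).filter fun x => ({i, j, x} : Finset ℕ) ∈ E).card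

/-- `([n], E)` contains a tight Hamiltonian cycle. -/
def HasTightHamCycle (n : ℕ) (E : Finset (Finset ℕ)) : Prop :=
  ∃ f : ZMod n → ℕ, Function.Injective f ∧ (∀ i, f i ∈ Finset.Icc 1 n) ∧
    (∀ v ∈ Finset.Icc 1 n, ∃ i, f i = v) ∧
    ∀ i : ZMod n, ({f i, f (i + 1), f (i + 2)} : Finset ℕ) ∈ E

lemma card_triple (a b c : ℕ) (hab : a ≠ b) (hac : a ≠ c) (hbc : b ≠ c) :
    ({a, b, c} : Finset ℕ).card = 3 := by
  rw [Finset.card_insert_of_notMem (by simp [hab, hac]),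
    Finset.card_insert_of_notMem (by simp [hbc]), Finset.card_singleton]

lemma card_triple_inter (a b c : ℕ) (Y : Finset ℕ) (hab : a ≠ b) (hac : a ≠ c) (hbc : b ≠ c) :
    (({a, b, c} : Finset ℕ) ∩ Y).card =
      (if a ∈ Y then 1 else 0) + ((if b ∈ Y then 1 else 0) + (if c ∈ Y then 1 else 0)) := by
  have h : ({a, b, c} : Finset ℕ) ∩ Y = Finset.filter (· ∈ Y) {a, b, c} := by
    ext x; simp [and_comm]
  rw [h, Finset.card_filter, Finset.sum_insert (by simp [hab, hac]),
    Finset.sum_insert (by simp [hbc]), Finset.sum_singleton]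

lemma mem_E_iff (n a b c : ℕ) (hab : a ≠ b) (hac : a ≠ c) (hbc : b ≠ c) :
    (({a, b, c} : Finset ℕ) ∈ ((Finset.Icc 1 n).powersetCard 3).filter
        (fun e => (e ∩ (Finset.Icc 1 n \ Finset.Icc 1 (n / 2))).card ≠ 2)) ↔
      (a ∈ Finset.Icc 1 n ∧ b ∈ Finset.Icc 1 n ∧ c ∈ Finset.Icc 1 n) ∧
        ((if a ∈ Finset.Icc 1 n \ Finset.Icc 1 (n / 2) then 1 else 0) +
          ((if b ∈ Finset.Icc 1 n \ Finset.Icc 1 (n / 2) then 1 else 0) +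
           (if c ∈ Finset.Icc 1 n \ Finset.Icc 1 (n / 2) then 1 else 0)) ≠ 2) := by
  rw [Finset.mem_filter, Finset.mem_powersetCard,
    card_triple_inter a b c _ hab hac hbc, card_triple a b c hab hac hbc,
    Finset.insert_subset_iff, Finset.insert_subset_iff, Finset.singleton_subset_iff]
  tauto

/-- Second extremal example: with `X = {1, …, ⌊n/2⌋}`, `Y = [n] \ X`, and `E`
consisting of all 3-subsets `e` of `[n]` with `|e ∩ Y| ≠ 2`, every pair of distinct
vertices has `d(i,j) ≥ n/2 − 2`, but there is no tight Hamiltonian cycle. -/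
theorem stmt_2 :
    ∃ n₀ : ℕ, ∀ n : ℕ, n₀ ≤ n →
      ∀ E : Finset (Finset ℕ),
        E = ((Finset.Icc 1 n).powersetCard 3).filter
              (fun e => (e ∩ (Finset.Icc 1 n \ Finset.Icc 1 (n / 2))).card ≠ 2) →
        (∀ i ∈ Finset.Icc 1 n, ∀ j ∈ Finset.Icc 1 n, i ≠ j →
            (n : ℝ) / 2 - 2 ≤ (pairDeg n E i j : ℝ)) ∧
        ¬ HasTightHamCycle n E := by
  refine ⟨7, fun n hn E hE => ?_⟩
  subst hE
  have hfloor1 : (n : ℝ) ≤ 2 * ((n / 2 : ℕ) : ℝ) + 1 := by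
    exact_mod_cast (by omega : n ≤ 2 * (n / 2) + 1)
  have hfloor2 : 2 * ((n / 2 : ℕ) : ℝ) ≤ (n : ℝ) := by
    exact_mod_cast (by omega : 2 * (n / 2) ≤ n)
  constructor
  · intro i hi j hj hij
    simp only [Finset.mem_Icc] at hi hj
    unfold pairDeg
    by_cases hiX : i ≤ n / 2 <;> by_cases hjX : j ≤ n / 2
    · -- both in X
      have hsub : Finset.Icc 1 n \ ({i, j} : Finset ℕ) ⊆
          (Finset.Icc 1 n).filter fun x => ({i, j, x} : Finset ℕ) ∈
            ((Finset.Icc 1 n).powersetCard 3).filter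
              (fun e => (e ∩ (Finset.Icc 1 n \ Finset.Icc 1 (n / 2))).card ≠ 2) := by
        intro x hx
        simp only [Finset.mem_sdiff, Finset.mem_insert, Finset.mem_singleton,
          Finset.mem_Icc, not_or] at hx
        rw [Finset.mem_filter, mem_E_iff n i j x hij (fun h => hx.2.1 h.symm)
          (fun h => hx.2.2 h.symm)]
        have hiY : i ∉ Finset.Icc 1 n \ Finset.Icc 1 (n / 2) := by
          simp only [Finset.mem_sdiff, Finset.mem_Icc]; omega
        have hjY : j ∉ Finset.Icc 1 n \ Finset.Icc 1 (n / 2) := by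
          simp only [Finset.mem_sdiff, Finset.mem_Icc]; omega
        refine ⟨by simp only [Finset.mem_Icc]; omega,
          ⟨by simp only [Finset.mem_Icc]; omega, by simp only [Finset.mem_Icc]; omega,
            by simp only [Finset.mem_Icc]; omega⟩, ?_⟩
        simp only [hiY, hjY, if_neg, if_false]
        split <;> omega
      have hcard := Finset.card_le_card hsub
      have h1 : (Finset.Icc 1 n \ ({i, j} : Finset ℕ)).card = n - 2 := by
        rw [Finset.card_sdiff_of_subset (by
          simp only [Finset.insert_subset_iff, Finset.singleton_subset_iff, Finset.mem_Icc]
          omega), Finset.card_pair hij, Nat.card_Icc]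
        omega
      rw [h1] at hcard
      have h4 : ((n - 2 : ℕ) : ℝ) ≤ _ := Nat.cast_le.mpr hcard
      rw [Nat.cast_sub (by omega : 2 ≤ n)] at h4
      push_cast at h4 ⊢
      linarith
    · -- i in X, j in Y
      have hsub : Finset.Icc 1 (n / 2) \ ({i} : Finset ℕ) ⊆
          (Finset.Icc 1 n).filter fun x => ({i, j, x} : Finset ℕ) ∈
            ((Finset.Icc 1 n).powersetCard 3).filter
              (fun e => (e ∩ (Finset.Icc 1 n \ Finset.Icc 1 (n / 2))).card ≠ 2) := by
        intro x hx
        simp only [Finset.mem_sdiff, Finset.mem_singleton, Finset.mem_Icc] at hx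
        rw [Finset.mem_filter, mem_E_iff n i j x hij (fun h => hx.2 h.symm)
          (by omega)]
        have hiY : i ∉ Finset.Icc 1 n \ Finset.Icc 1 (n / 2) := by
          simp only [Finset.mem_sdiff, Finset.mem_Icc]; omega
        have hjY : j ∈ Finset.Icc 1 n \ Finset.Icc 1 (n / 2) := by
          simp only [Finset.mem_sdiff, Finset.mem_Icc]; omega
        have hxY : x ∉ Finset.Icc 1 n \ Finset.Icc 1 (n / 2) := by
          simp only [Finset.mem_sdiff, Finset.mem_Icc]; omega
        refine ⟨by simp only [Finset.mem_Icc]; omega,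
          ⟨by simp only [Finset.mem_Icc]; omega, by simp only [Finset.mem_Icc]; omega,
            by simp only [Finset.mem_Icc]; omega⟩, ?_⟩
        simp [hiY, hjY, hxY]
      have hcard := Finset.card_le_card hsub
      have h1 : (Finset.Icc 1 (n / 2) \ ({i} : Finset ℕ)).card = n / 2 - 1 := by
        rw [Finset.card_sdiff_of_subset (by
          simp only [Finset.singleton_subset_iff, Finset.mem_Icc]; omega),
          Finset.card_singleton, Nat.card_Icc]
        omega
      rw [h1] at hcard
      have h4 : ((n / 2 - 1 : ℕ) : ℝ) ≤ _ := Nat.cast_le.mpr hcard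
      rw [Nat.cast_sub (by omega : 1 ≤ n / 2)] at h4
      push_cast at h4 ⊢
      linarith
    · -- i in Y, j in X
      have hsub : Finset.Icc 1 (n / 2) \ ({j} : Finset ℕ) ⊆
          (Finset.Icc 1 n).filter fun x => ({i, j, x} : Finset ℕ) ∈
            ((Finset.Icc 1 n).powersetCard 3).filter
              (fun e => (e ∩ (Finset.Icc 1 n \ Finset.Icc 1 (n / 2))).card ≠ 2) := by
        intro x hx
        simp only [Finset.mem_sdiff, Finset.mem_singleton, Finset.mem_Icc] at hx
        rw [Finset.mem_filter, mem_E_iff n i j x hij (by omega)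
          (fun h => hx.2 h.symm)]
        have hiY : i ∈ Finset.Icc 1 n \ Finset.Icc 1 (n / 2) := by
          simp only [Finset.mem_sdiff, Finset.mem_Icc]; omega
        have hjY : j ∉ Finset.Icc 1 n \ Finset.Icc 1 (n / 2) := by
          simp only [Finset.mem_sdiff, Finset.mem_Icc]; omega
        have hxY : x ∉ Finset.Icc 1 n \ Finset.Icc 1 (n / 2) := by
          simp only [Finset.mem_sdiff, Finset.mem_Icc]; omega
        refine ⟨by simp only [Finset.mem_Icc]; omega,
          ⟨by simp only [Finset.mem_Icc]; omega, by simp only [Finset.mem_Icc]; omega,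
            by simp only [Finset.mem_Icc]; omega⟩, ?_⟩
        simp [hiY, hjY, hxY]
      have hcard := Finset.card_le_card hsub
      have h1 : (Finset.Icc 1 (n / 2) \ ({j} : Finset ℕ)).card = n / 2 - 1 := by
        rw [Finset.card_sdiff_of_subset (by
          simp only [Finset.singleton_subset_iff, Finset.mem_Icc]; omega),
          Finset.card_singleton, Nat.card_Icc]
        omega
      rw [h1] at hcard
      have h4 : ((n / 2 - 1 : ℕ) : ℝ) ≤ _ := Nat.cast_le.mpr hcard
      rw [Nat.cast_sub (by omega : 1 ≤ n / 2)] at h4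
      push_cast at h4 ⊢
      linarith
    · -- both in Y
      have hsub : (Finset.Icc 1 n \ Finset.Icc 1 (n / 2)) \ ({i, j} : Finset ℕ) ⊆
          (Finset.Icc 1 n).filter fun x => ({i, j, x} : Finset ℕ) ∈
            ((Finset.Icc 1 n).powersetCard 3).filter
              (fun e => (e ∩ (Finset.Icc 1 n \ Finset.Icc 1 (n / 2))).card ≠ 2) := by
        intro x hx
        simp only [Finset.mem_sdiff, Finset.mem_insert, Finset.mem_singleton,
          Finset.mem_Icc, not_or] at hx
        rw [Finset.mem_filter, mem_E_iff n i j x hij (fun h => hx.2.1 h.symm)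
          (fun h => hx.2.2 h.symm)]
        have hiY : i ∈ Finset.Icc 1 n \ Finset.Icc 1 (n / 2) := by
          simp only [Finset.mem_sdiff, Finset.mem_Icc]; omega
        have hjY : j ∈ Finset.Icc 1 n \ Finset.Icc 1 (n / 2) := by
          simp only [Finset.mem_sdiff, Finset.mem_Icc]; omega
        have hxY : x ∈ Finset.Icc 1 n \ Finset.Icc 1 (n / 2) := by
          simp only [Finset.mem_sdiff, Finset.mem_Icc]; omega
        refine ⟨by simp only [Finset.mem_Icc]; omega,
          ⟨by simp only [Finset.mem_Icc]; omega, by simp only [Finset.mem_Icc]; omega,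
            by simp only [Finset.mem_Icc]; omega⟩, ?_⟩
        simp [hiY, hjY, hxY]
      have hcard := Finset.card_le_card hsub
      have h1 : ((Finset.Icc 1 n \ Finset.Icc 1 (n / 2)) \ ({i, j} : Finset ℕ)).card
          = n - n / 2 - 2 := by
        rw [Finset.card_sdiff_of_subset (by
          simp only [Finset.insert_subset_iff, Finset.singleton_subset_iff,
            Finset.mem_sdiff, Finset.mem_Icc]
          omega), Finset.card_pair hij,
          Finset.card_sdiff_of_subset (by
            intro x hx
            simp only [Finset.mem_Icc] at hx ⊢
            omega), Nat.card_Icc, Nat.card_Icc]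
        omega
      rw [h1] at hcard
      have h4 : ((n - n / 2 - 2 : ℕ) : ℝ) ≤ _ := Nat.cast_le.mpr hcard
      rw [Nat.cast_sub (by omega : 2 ≤ n - n / 2), Nat.cast_sub (by omega : n / 2 ≤ n)] at h4
      push_cast at h4 ⊢
      linarith
  · rintro ⟨f, hinj, hmem, hsurj, hedge⟩
    haveI : NeZero n := ⟨by omega⟩
    haveI : Fact (1 < n) := ⟨by omega⟩
    have h01 : (1 : ZMod n) ≠ 0 := one_ne_zero
    have h02 : (2 : ZMod n) ≠ 0 := by
      intro h
      have h2 : ((2 : ℕ) : ZMod n) = 0 := by exact_mod_cast h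
      have := (ZMod.natCast_eq_zero_iff 2 n).mp h2
      have := Nat.le_of_dvd (by norm_num) this
      omega
    have hd1 : ∀ i : ZMod n, i ≠ i + 1 := by
      intro i h
      exact h01 (left_eq_add.mp h)
    have hd2 : ∀ i : ZMod n, i ≠ i + 2 := by
      intro i h
      exact h02 (left_eq_add.mp h)
    set Y : Finset ℕ := Finset.Icc 1 n \ Finset.Icc 1 (n / 2) with hY
    set g : ZMod n → ℕ := fun i => if f i ∈ Y then 1 else 0 with hg_def
    have hg : ∀ i, g i ≤ 1 := by
      intro i
      simp only [hg_def]
      split <;> omega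
    have hc : ∀ i : ZMod n, g i + (g (i + 1) + g (i + 2)) ≠ 2 := by
      intro i
      have hne12 : f i ≠ f (i + 1) := fun h => hd1 i (hinj h)
      have hne13 : f i ≠ f (i + 2) := fun h => hd2 i (hinj h)
      have hne23 : f (i + 1) ≠ f (i + 2) := by
        intro h
        have := hinj h
        have : (1 : ZMod n) = 2 := by
          have := add_left_cancel this
          exact this
        have : (1 : ZMod n) - 2 = 0 := by rw [this]; ring
        have : (-1 : ZMod n) = 0 := by rw [← this]; ring
        have : (1 : ZMod n) = 0 := by
          rw [← neg_neg (1 : ZMod n), this, neg_zero]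
        exact h01 this
      have h := hedge i
      rw [hY, mem_E_iff n _ _ _ hne12 hne13 hne23] at h
      exact h.2
    by_cases hA : ∀ i : ZMod n, g i + (g (i + 1) + g (i + 2)) ≤ 1
    · -- all windows have at most one Y vertex
      have hsum : ∑ i : ZMod n, (g i + (g (i + 1) + g (i + 2))) ≤
          ∑ _i : ZMod n, 1 := Finset.sum_le_sum fun i _ => hA i
      rw [Finset.sum_add_distrib, Finset.sum_add_distrib] at hsum
      have e1 : ∑ i : ZMod n, g (i + 1) = ∑ i : ZMod n, g i :=
        Fintype.sum_equiv (Equiv.addRight 1) _ _ (fun i => rfl)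
      have e2 : ∑ i : ZMod n, g (i + 2) = ∑ i : ZMod n, g i :=
        Fintype.sum_equiv (Equiv.addRight 2) _ _ (fun i => rfl)
      rw [e1, e2, Finset.sum_const, Finset.card_univ, ZMod.card, smul_eq_mul, mul_one] at hsum
      have hSg : ∑ i : ZMod n, g i = (Finset.univ.filter (fun i => f i ∈ Y)).card := by
        rw [Finset.card_filter]
      have himg : (Finset.univ.filter (fun i => f i ∈ Y)).image f = Y := by
        ext y
        simp only [Finset.mem_image, Finset.mem_filter, Finset.mem_univ, true_and]
        constructor
        · rintro ⟨i, hiY, rfl⟩; exact hiY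
        · intro hy
          obtain ⟨i, rfl⟩ := hsurj y (Finset.mem_sdiff.mp (hY ▸ hy)).1
          exact ⟨i, hy, rfl⟩
      have hfc : (Finset.univ.filter (fun i => f i ∈ Y)).card = Y.card := by
        have h := Finset.card_image_of_injective
          (Finset.univ.filter (fun i => f i ∈ Y)) hinj
        rw [himg] at h
        exact h.symm
      have hYcard : Y.card = n - n / 2 := by
        rw [hY, Finset.card_sdiff_of_subset (by
          intro x hx
          simp only [Finset.mem_Icc] at hx ⊢
          omega), Nat.card_Icc, Nat.card_Icc]
        omega
      rw [hSg, hfc, hYcard] at hsum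
      omega
    · push_neg at hA
      obtain ⟨i0, hi0⟩ := hA
      have hbase : g i0 = 1 ∧ g (i0 + 1) = 1 ∧ g (i0 + 2) = 1 := by
        have := hg i0; have := hg (i0 + 1); have := hg (i0 + 2); have := hc i0
        omega
      have hall : ∀ k : ℕ, g (i0 + k) = 1 ∧ g (i0 + k + 1) = 1 ∧ g (i0 + k + 2) = 1 := by
        intro k
        induction k with
        | zero => simpa using hbase
        | succ k ih =>
          obtain ⟨h0, h1, h2⟩ := ih
          have hck := hc (i0 + k + 1)
          have e1 : i0 + (k : ZMod n) + 1 + 1 = i0 + (k : ZMod n) + 2 := by ring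
          have e2 : i0 + (k : ZMod n) + 1 + 2 = i0 + (k : ZMod n) + 3 := by ring
          rw [e1, e2] at hck
          have h3 := hg (i0 + k + 3)
          have hlast : g (i0 + (k : ZMod n) + 3) = 1 := by omega
          have ek : (((k + 1 : ℕ)) : ZMod n) = (k : ZMod n) + 1 := by push_cast; ring
          rw [ek]
          refine ⟨by rw [show i0 + ((k : ZMod n) + 1) = i0 + k + 1 by ring]; exact h1,
            by rw [show i0 + ((k : ZMod n) + 1) + 1 = i0 + k + 2 by ring]; exact h2,
            by rw [show i0 + ((k : ZMod n) + 1) + 2 = i0 + k + 3 by ring]; exact hlast⟩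
      have hallj : ∀ j : ZMod n, g j = 1 := by
        intro j
        have hv : (((j - i0).val : ℕ) : ZMod n) = j - i0 := ZMod.natCast_rightInverse _
        have := (hall (j - i0).val).1
        rwa [hv, show i0 + (j - i0) = j by ring] at this
      obtain ⟨i1, hi1⟩ := hsurj 1 (by simp only [Finset.mem_Icc]; omega)
      have h1Y : (1 : ℕ) ∉ Y := by
        rw [hY]
        simp only [Finset.mem_sdiff, Finset.mem_Icc]
        omega
      have := hallj i1
      rw [hg_def] at this
      simp only [hi1, h1Y, if_false] at this
      omega
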